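/- arXiv:2303.03662 — 4 statements merged into one kernel-verified Lean document; each statement's English description precedes it below -/
import Mathlib

section
/- Let a11, a12, a22 > 0 and let G : [0,∞) → ℝ be continuous with G(0) = 0, differentiable at 0 with G'(0) > a11*a22/a12, such that z ↦ G(z)/z is strictly decreasing on (0,∞) and lim_{z→∞} G(z)/z < a11*a22/a12. Then there exists a unique u* > 0 with G(u*)/u* = a11*a22/a12. -/
open Filter Set Topology

theorem tendsto_div_self_nhdsNE_zero_of_hasDerivAt {G : ℝ → ℝ} {g0 : ℝ} (hG0 : G 0 = 0)
    (hGd : HasDerivAt G g0 0) : Tendsto (fun z => G z / z) (𝓝[≠] 0) (𝓝 g0) := by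
  simpa [hG0, div_eq_inv_mul] using hasDerivAt_iff_tendsto_slope_zero.mp hGd

theorem StrictAntiOn.existsUnique_eq_of_tendsto {f : ℝ → ℝ} {a p q c : ℝ}
    (hcont : ContinuousOn f (Ioi a)) (hanti : StrictAntiOn f (Ioi a))
    (hp : Tendsto f (𝓝[>] a) (𝓝 p)) (hq : Tendsto f atTop (𝓝 q)) (hqc : q < c) (hcp : c < p) :
    ∃! u, a < u ∧ f u = c := by
  obtain ⟨u, hu, hfu⟩ := isPreconnected_Ioi.intermediate_value_Ioo (l₂ := 𝓝[>] a)
    (le_principal_iff.mpr (Ioi_mem_atTop a)) inf_le_right hcont hq hp ⟨hqc, hcp⟩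
  exact ⟨u, ⟨hu, hfu⟩, fun v ⟨hv, hfv⟩ => hanti.injOn hv hu (hfv.trans hfu.symm)⟩

theorem stmt_2_general (a11 a12 a22 : ℝ)
    (G : ℝ → ℝ) (hGcont : ContinuousOn G (Set.Ici 0)) (hG0 : G 0 = 0)
    (g0 : ℝ) (hGd : HasDerivAt G g0 0) (hg0 : a11 * a22 / a12 < g0)
    (hdec : StrictAntiOn (fun z => G z / z) (Set.Ioi 0))
    (l : ℝ) (hlim : Filter.Tendsto (fun z => G z / z) Filter.atTop (nhds l))
    (hl : l < a11 * a22 / a12) :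
    ∃! u : ℝ, 0 < u ∧ G u / u = a11 * a22 / a12 := by
  have hcont : ContinuousOn (fun z => G z / z) (Ioi 0) :=
    (hGcont.mono Ioi_subset_Ici_self).div continuousOn_id fun _ hz => ne_of_gt hz
  have hright : Tendsto (fun z => G z / z) (𝓝[>] 0) (𝓝 g0) :=
    (tendsto_div_self_nhdsNE_zero_of_hasDerivAt hG0 hGd).mono_left
      (nhdsWithin_mono _ fun _ hz => ne_of_gt hz)
  exact hdec.existsUnique_eq_of_tendsto hcont hright hlim hl hg0

theorem stmt_2 (a11 a12 a22 : ℝ) (h11 : 0 < a11) (h12 : 0 < a12) (h22 : 0 < a22)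
    (G : ℝ → ℝ) (hGcont : ContinuousOn G (Set.Ici 0)) (hG0 : G 0 = 0)
    (g0 : ℝ) (hGd : HasDerivAt G g0 0) (hg0 : a11 * a22 / a12 < g0)
    (hdec : StrictAntiOn (fun z => G z / z) (Set.Ioi 0))
    (l : ℝ) (hlim : Filter.Tendsto (fun z => G z / z) Filter.atTop (nhds l))
    (hl : l < a11 * a22 / a12) :
    ∃! u : ℝ, 0 < u ∧ G u / u = a11 * a22 / a12 :=
  stmt_2_general a11 a12 a22 G hGcont hG0 g0 hGd hg0 hdec l hlim hl
end

section
/- Let a11, a12, a22 > 0, let G : [0,∞) → ℝ satisfy G(0) = 0, G ∈ C^1 near 0, G'(0) > 0, and a12*G'(0) > a11*a22. Then there exist positive constants δ1, δ2, ρ such that for all s ∈ (0,1]: -a11*(s*δ1) + a12*(s*δ2) ≥ ρ*s*(δ1 + δ2) and G(s*δ1) - a22*(s*δ2) ≥ ρ*s*(δ1 + δ2). -/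
/-! Pick a ratio `r = δ₂/δ₁` with `a₁₁/a₁₂ < r < G'(0)/a₂₂`, possible exactly because
`a₁₁ a₂₂ < a₁₂ G'(0)`. Along the ray `s ↦ s (δ₁, δ₂)` the first expression is then
`(a₁₂ r - a₁₁) s δ₁`, and the second is at least `(c - a₂₂ r) s δ₁` for any `c < G'(0)` once
`s δ₁` is small, since `G(x) ≥ c x` near `0⁺`. Both coefficients are positive, and `δ₁` is taken
small enough that `s δ₁` stays in the range where the derivative bound holds for all `s ≤ 1`. -/

open Set Filter Topology

lemma exists_pos_between_ratios {a11 a12 a22 g : ℝ} (h11 : 0 < a11) (h12 : 0 < a12)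
    (h22 : 0 < a22) (hR : a11 * a22 < a12 * g) :
    ∃ r, 0 < r ∧ a11 < a12 * r ∧ a22 * r < g := by
  have hlt : a11 / a12 < g / a22 := by rwa [div_lt_div_iff₀ h12 h22, mul_comm g]
  have hpos : 0 < a11 / a12 := by positivity
  refine ⟨(a11 / a12 + g / a22) / 2, by linarith, ?_, ?_⟩
  · rw [← div_lt_iff₀' h12]; linarith
  · rw [← lt_div_iff₀' h22]; linarith

lemma HasDerivAt.exists_add_mul_le_right {f : ℝ → ℝ} {f' c a : ℝ} (hf : HasDerivAt f f' a)
    (hc : c < f') : ∃ δ > 0, ∀ t ∈ Ioo 0 δ, f a + c * t ≤ f (a + t) := by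
  have hslope : ∀ᶠ t in 𝓝[>] 0, c < t⁻¹ • (f (a + t) - f a) :=
    hf.tendsto_slope_zero_right.eventually (lt_mem_nhds hc)
  obtain ⟨δ, hδ, hsub⟩ := mem_nhdsGT_iff_exists_Ioo_subset.mp hslope
  refine ⟨δ, hδ, fun t ht => ?_⟩
  have hlt : c < t⁻¹ * (f (a + t) - f a) := hsub ht
  rw [← div_eq_inv_mul, lt_div_iff₀ ht.1] at hlt
  linarith

theorem stmt_3_general (a11 a12 a22 : ℝ) (h11 : 0 < a11) (h12 : 0 < a12) (h22 : 0 < a22)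
    (G : ℝ → ℝ) (hG0 : G 0 = 0) (hC1 : ContDiffAt ℝ 1 G 0)
    (hR : a11 * a22 < a12 * deriv G 0) :
    ∃ δ1 δ2 ρ : ℝ, 0 < δ1 ∧ 0 < δ2 ∧ 0 < ρ ∧
      ∀ s ∈ Set.Ioc (0:ℝ) 1,
        ρ * s * (δ1 + δ2) ≤ -a11*(s*δ1) + a12*(s*δ2) ∧
        ρ * s * (δ1 + δ2) ≤ G (s*δ1) - a22*(s*δ2) := by
  obtain ⟨r, hr, hlin, hquad⟩ := exists_pos_between_ratios h11 h12 h22 hR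
  obtain ⟨c, hrc, hcg⟩ := exists_between hquad
  obtain ⟨δ, hδ, hG⟩ :=
    (hC1.differentiableAt one_ne_zero).hasDerivAt.exists_add_mul_le_right hcg
  set κ := min (a12 * r - a11) (c - a22 * r)
  have hκ : 0 < κ := lt_min (by linarith) (by linarith)
  refine ⟨δ / 2, r * (δ / 2), κ / (1 + r), by positivity, by positivity, by positivity, ?_⟩
  rintro s ⟨hs0, hs1⟩
  have hx : s * (δ / 2) ∈ Ioo 0 δ := ⟨by positivity, by nlinarith⟩
  have hGx : c * (s * (δ / 2)) ≤ G (s * (δ / 2)) := by simpa [hG0] using hG _ hx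
  have hρ : κ / (1 + r) * s * (δ / 2 + r * (δ / 2)) = κ * (s * (δ / 2)) := by
    field_simp
  rw [hρ]
  constructor
  · calc κ * (s * (δ / 2)) ≤ (a12 * r - a11) * (s * (δ / 2)) :=
          mul_le_mul_of_nonneg_right (min_le_left _ _) hx.1.le
      _ = _ := by ring
  · calc κ * (s * (δ / 2)) ≤ (c - a22 * r) * (s * (δ / 2)) :=
          mul_le_mul_of_nonneg_right (min_le_right _ _) hx.1.le
      _ ≤ _ := by linarith

theorem stmt_3 (a11 a12 a22 : ℝ) (h11 : 0 < a11) (h12 : 0 < a12) (h22 : 0 < a22)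
    (G : ℝ → ℝ) (hG0 : G 0 = 0) (hC1 : ContDiffAt ℝ 1 G 0)
    (hGd : 0 < deriv G 0) (hR : a11 * a22 < a12 * deriv G 0) :
    ∃ δ1 δ2 ρ : ℝ, 0 < δ1 ∧ 0 < δ2 ∧ 0 < ρ ∧
      ∀ s ∈ Set.Ioc (0:ℝ) 1,
        ρ * s * (δ1 + δ2) ≤ -a11*(s*δ1) + a12*(s*δ2) ∧
        ρ * s * (δ1 + δ2) ≤ G (s*δ1) - a22*(s*δ2) :=
  stmt_3_general a11 a12 a22 h11 h12 h22 G hG0 hC1 hR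
end

section
/- Let α ∈ (1,2], λ ≥ 1, K1 > 0, δ > 0, and let J : ℝ → ℝ be even, nonnegative and measurable with J(y) ≥ K1 * |y|^{-α} for all |y| ≥ 1. Let h ≥ 4 and define v(y) = δ * (1 - |y|/h)^λ for |y| ≤ h and v(y) = 0 otherwise. Then for every x with 3h/4 ≤ x ≤ h, ∫_{-h}^{h} J(x - y) * v(y) dy ≥ (K1 * δ * (4^{α-1} - 2^{α-1})) / (4^λ * (α-1)) * h^{1-α}. -/
/-!
On `y ∈ [x - h/2, x - h/4]` one has `x - y ∈ [h/4, h/2]`, so `J (x - y) ≥ K1 (x - y)^(-α)` (as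
`h/4 ≥ 1`), and `y ∈ [h/4, 3h/4]`, so `v y ≥ δ 4^(-λ)`. Integrating this pointwise lower bound over
that subinterval of `[-h, h]` gives `K1 δ 4^(-λ) ∫_{h/4}^{h/2} t^(-α) dt`, which is the constant.
-/

open MeasureTheory Set

lemma ofReal_intervalIntegral_le_setLIntegral {f g : ℝ → ℝ} {a b : ℝ} {s : Set ℝ}
    (hab : a ≤ b) (hs : Icc a b ⊆ s) (hg : ContinuousOn g (Icc a b))
    (hg0 : ∀ y ∈ Icc a b, 0 ≤ g y) (hgf : ∀ y ∈ Icc a b, g y ≤ f y) :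
    ENNReal.ofReal (∫ y in a..b, g y) ≤ ∫⁻ y in s, ENNReal.ofReal (f y) :=
  calc ENNReal.ofReal (∫ y in a..b, g y)
      = ∫⁻ y in Icc a b, ENNReal.ofReal (g y) := by
        rw [intervalIntegral.integral_of_le hab, ← integral_Icc_eq_integral_Ioc]
        exact ofReal_integral_eq_lintegral_ofReal hg.integrableOn_Icc
          ((ae_restrict_iff' measurableSet_Icc).2 (Filter.Eventually.of_forall hg0))
    _ ≤ ∫⁻ y in Icc a b, ENNReal.ofReal (f y) :=
        setLIntegral_mono' measurableSet_Icc fun y hy => ENNReal.ofReal_le_ofReal (hgf y hy)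
    _ ≤ ∫⁻ y in s, ENNReal.ofReal (f y) := lintegral_mono_set hs

lemma integral_rpow_neg_div {α h p q : ℝ} (hα : α ≠ 1) (hh : 0 < h) (hp : 0 < p) (hq : 0 < q) :
    ∫ t in h/p..h/q, t ^ (-α) = (p ^ (α - 1) - q ^ (α - 1)) / (α - 1) * h ^ (1 - α) := by
  have hzero : (0:ℝ) ∉ uIcc (h/p) (h/q) := by
    rw [mem_uIcc]
    have := div_pos hh hp
    have := div_pos hh hq
    rintro (⟨h1, -⟩ | ⟨h1, -⟩) <;> linarith
  have hdiv : ∀ r : ℝ, 0 < r → (h / r) ^ (-α + 1) = r ^ (α - 1) * h ^ (1 - α) := fun r hr => by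
    rw [Real.div_rpow hh.le hr.le, div_eq_mul_inv, ← Real.rpow_neg hr.le, neg_add', neg_neg,
      neg_add_eq_sub, mul_comm]
  have hα' : α - 1 ≠ 0 := sub_ne_zero.2 hα
  rw [integral_rpow (Or.inr ⟨by contrapose! hα; linarith, hzero⟩), hdiv p hp, hdiv q hq,
    show -α + 1 = -(α - 1) by ring]
  field_simp
  ring

lemma div_rpow_le_one_sub_div_rpow {δ lam h y : ℝ} (hδ : 0 ≤ δ) (hlam : 0 ≤ lam) (hh : 0 < h)
    (hy : |y| ≤ 3 * h / 4) : δ / 4 ^ lam ≤ δ * (1 - |y| / h) ^ lam := by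
  have hquarter : 1 / 4 ≤ 1 - |y| / h := by
    rw [le_sub_comm, div_le_iff₀ hh]; linarith
  calc δ / 4 ^ lam = δ * (1 / 4) ^ lam := by
        rw [Real.div_rpow zero_le_one (by norm_num), Real.one_rpow, mul_one_div]
    _ ≤ δ * (1 - |y| / h) ^ lam := by gcongr

lemma mul_rpow_le_kernel_mul_profile {α lam K1 δ h x y : ℝ} {J v : ℝ → ℝ} (hK1 : 0 ≤ K1)
    (hδ : 0 ≤ δ) (hlam : 0 ≤ lam) (hJ : ∀ y : ℝ, 1 ≤ |y| → K1 * |y| ^ (-α) ≤ J y) (hh : 4 ≤ h)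
    (hv : ∀ y, v y = if |y| ≤ h then δ * (1 - |y|/h) ^ lam else 0)
    (hx1 : 3*h/4 ≤ x) (hx2 : x ≤ h) (hy : y ∈ Icc (x - h/2) (x - h/4)) :
    K1 * δ / 4 ^ lam * (x - y) ^ (-α) ≤ J (x - y) * v y := by
  obtain ⟨hy1, hy2⟩ := hy
  have hxy : |x - y| = x - y := abs_of_nonneg (by linarith)
  have hJy : K1 * (x - y) ^ (-α) ≤ J (x - y) := by
    simpa only [hxy] using hJ (x - y) (by rw [hxy]; linarith)
  have hJ0 : 0 ≤ J (x - y) := (mul_nonneg hK1 (Real.rpow_nonneg (by linarith) _)).trans hJy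
  have hy : |y| ≤ 3 * h / 4 := by rw [abs_le]; constructor <;> linarith
  have hvy : δ / 4 ^ lam ≤ v y := by
    rw [hv, if_pos (by linarith)]
    exact div_rpow_le_one_sub_div_rpow hδ hlam (by linarith) hy
  calc K1 * δ / 4 ^ lam * (x - y) ^ (-α) = K1 * (x - y) ^ (-α) * (δ / 4 ^ lam) := by ring
    _ ≤ J (x - y) * v y := mul_le_mul hJy hvy (by positivity) hJ0

theorem stmt_11_general (α lam K1 δ : ℝ) (hα : α ∈ Set.Ioc (1:ℝ) 2) (hlam : 1 ≤ lam)
    (hK1 : 0 < K1) (hδ : 0 < δ)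
    (J : ℝ → ℝ)
    (hJ : ∀ y : ℝ, 1 ≤ |y| → K1 * |y| ^ (-α) ≤ J y)
    (h : ℝ) (hh : 4 ≤ h)
    (v : ℝ → ℝ)
    (hv : ∀ y, v y = if |y| ≤ h then δ * (1 - |y|/h) ^ lam else 0)
    (x : ℝ) (hx1 : 3*h/4 ≤ x) (hx2 : x ≤ h) :
    ENNReal.ofReal (K1 * δ * ((4:ℝ) ^ (α-1) - (2:ℝ) ^ (α-1)) / ((4:ℝ) ^ lam * (α-1)) * h ^ (1-α))
      ≤ ∫⁻ y in Set.Icc (-h) h, ENNReal.ofReal (J (x - y) * v y) := by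
  have hh0 : 0 < h := by linarith
  have hα' : α - 1 ≠ 0 := sub_ne_zero.2 hα.1.ne'
  have hintegral : ∫ y in (x - h/2)..(x - h/4), K1 * δ / 4 ^ lam * (x - y) ^ (-α)
      = K1 * δ * ((4:ℝ) ^ (α-1) - (2:ℝ) ^ (α-1)) / ((4:ℝ) ^ lam * (α-1)) * h ^ (1-α) := by
    rw [intervalIntegral.integral_const_mul,
      intervalIntegral.integral_comp_sub_left (fun t => t ^ (-α)), sub_sub_cancel, sub_sub_cancel,
      integral_rpow_neg_div hα.1.ne' hh0 (by norm_num) (by norm_num)]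
    field_simp
  rw [← hintegral]
  refine ofReal_intervalIntegral_le_setLIntegral (by linarith)
    (Icc_subset_Icc (by linarith) (by linarith)) ?_ ?_
    fun y hy => mul_rpow_le_kernel_mul_profile hK1.le hδ.le (by linarith) hJ hh hv hx1 hx2 hy
  · exact continuousOn_const.mul <| (continuousOn_const.sub continuousOn_id).rpow_const
      fun y hy => Or.inl (sub_pos.2 (by linarith [hy.2] : y < x)).ne'
  · exact fun y hy => mul_nonneg (by positivity) (Real.rpow_nonneg (by linarith [hy.2]) _)

theorem stmt_11 (α lam K1 δ : ℝ) (hα : α ∈ Set.Ioc (1:ℝ) 2) (hlam : 1 ≤ lam)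
    (hK1 : 0 < K1) (hδ : 0 < δ)
    (J : ℝ → ℝ) (hJm : Measurable J) (hJ0 : ∀ x, 0 ≤ J x)
    (hJeven : ∀ x, J (-x) = J x)
    (hJ : ∀ y : ℝ, 1 ≤ |y| → K1 * |y| ^ (-α) ≤ J y)
    (h : ℝ) (hh : 4 ≤ h)
    (v : ℝ → ℝ)
    (hv : ∀ y, v y = if |y| ≤ h then δ * (1 - |y|/h) ^ lam else 0)
    (x : ℝ) (hx1 : 3*h/4 ≤ x) (hx2 : x ≤ h) :
    ENNReal.ofReal (K1 * δ * ((4:ℝ) ^ (α-1) - (2:ℝ) ^ (α-1)) / ((4:ℝ) ^ lam * (α-1)) * h ^ (1-α))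
      ≤ ∫⁻ y in Set.Icc (-h) h, ENNReal.ofReal (J (x - y) * v y) :=
  stmt_11_general α lam K1 δ hα hlam hK1 hδ J hJ h hh v hv x hx1 hx2
end

section
/- Let J : ℝ → ℝ be continuous, bounded, even, nonnegative, with J(0) > 0 and ∫_ℝ J = 1, and let λ ≥ 1. Then for every ε ∈ (0,1) there exists L0 > 0 such that for all L ≥ L0 and all x ∈ [-L, L], ∫_{-L}^{L} J(x - y) * (1 - |y|/L)^λ dy ≥ (1 - ε) * (1 - |x|/L)^λ. -/
/-!
Write `φ s = (max (1 - s) 0) ^ λ`. The profile is `φ (|y| / L)`, which vanishes outside `[-L, L]`,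
so the integral is `∫ J z * φ (|x - z| / L) dz` over all of `ℝ`. As `J` is even, `φ (|x - z| / L)`
may be replaced by the average of `φ (|x ± z| / L)`, and we keep only `|z| ≤ A`, where `J` has
mass `> 1 - ε / 2`. With `δ = A / L` that average is at least `(1 - λ δ) φ (|x| / L)`: since
`|x + z| + |x - z| = 2 max |x| |z|` and `φ` is convex and antitone, it is at least
`φ (max |x| |z| / L)`, which is `φ (|x| / L)` or, by Bernoulli's inequality, at least `1 - λ δ`.
For `L ≥ 2 λ A / ε` the two losses combine to `(1 - ε / 2)² ≥ 1 - ε`.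
-/

open MeasureTheory Filter Set

noncomputable def hingePow (lam s : ℝ) : ℝ := (max (1 - s) 0) ^ lam

section hingePow

variable {lam : ℝ}

lemma hingePow_nonneg (lam s : ℝ) : 0 ≤ hingePow lam s :=
  Real.rpow_nonneg (le_max_right _ _) _

lemma hingePow_le_one (hlam : 0 ≤ lam) {s : ℝ} (hs : 0 ≤ s) : hingePow lam s ≤ 1 :=
  Real.rpow_le_one (le_max_right _ _) (max_le (by linarith) zero_le_one) hlam

lemma hingePow_of_le_one {s : ℝ} (hs : s ≤ 1) : hingePow lam s = (1 - s) ^ lam := by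
  rw [hingePow, max_eq_left (by linarith)]

lemma hingePow_of_one_le (hlam : lam ≠ 0) {s : ℝ} (hs : 1 ≤ s) : hingePow lam s = 0 := by
  rw [hingePow, max_eq_right (by linarith), Real.zero_rpow hlam]

lemma antitone_hingePow (hlam : 0 ≤ lam) : Antitone (hingePow lam) := fun _ _ hst =>
  Real.rpow_le_rpow (le_max_right _ _) (max_le_max_right _ (by linarith)) hlam

lemma measurable_hingePow (lam : ℝ) : Measurable (hingePow lam) := by
  unfold hingePow; fun_prop

lemma convexOn_hingePow (hlam : 1 ≤ lam) : ConvexOn ℝ univ (hingePow lam) := by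
  have hramp : ConvexOn ℝ univ fun s : ℝ => max (1 - s) 0 :=
    ((convexOn_const 1 convex_univ).sub (concaveOn_id convex_univ)).sup
      (convexOn_const (0 : ℝ) convex_univ)
  have himage : (fun s : ℝ => max (1 - s) 0) '' univ = Ici 0 := by
    ext t
    refine ⟨?_, fun ht => ⟨1 - t, mem_univ _, by simpa using ht⟩⟩
    rintro ⟨s, -, rfl⟩
    exact le_max_right (1 - s) 0
  refine ConvexOn.comp (g := fun x : ℝ => x ^ lam) ?_ hramp ?_
  · rw [himage]; exact convexOn_rpow hlam
  · rw [himage]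
    exact fun x hx y _ hxy => Real.rpow_le_rpow hx hxy (by linarith)

lemma hingePow_midpoint_le (hlam : 1 ≤ lam) (u v : ℝ) :
    hingePow lam ((u + v) / 2) ≤ (hingePow lam u + hingePow lam v) / 2 := by
  have := (convexOn_hingePow hlam).2 (mem_univ u) (mem_univ v)
    (by norm_num : (0:ℝ) ≤ 1/2) (by norm_num : (0:ℝ) ≤ 1/2) (by norm_num)
  simp only [smul_eq_mul] at this
  calc hingePow lam ((u + v) / 2) = hingePow lam (1 / 2 * u + 1 / 2 * v) := by ring_nf
    _ ≤ _ := this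
    _ = _ := by ring

lemma one_sub_mul_le_hingePow (hlam : 1 ≤ lam) {s : ℝ} (hs : 0 ≤ s) :
    1 - lam * s ≤ hingePow lam s := by
  rcases le_total s 1 with hs1 | hs1
  · rw [hingePow_of_le_one hs1]
    simpa [sub_eq_add_neg] using one_add_mul_self_le_rpow_one_add (by linarith : -1 ≤ -s) hlam
  · nlinarith [hingePow_nonneg lam s]

lemma abs_add_add_abs_sub_le (a h : ℝ) : |a + h| + |a - h| ≤ 2 * max |a| |h| := by
  have := le_max_left |a| |h|
  have := le_max_right |a| |h|
  rcases abs_cases (a + h) with ⟨h1, -⟩ | ⟨h1, -⟩ <;>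
  rcases abs_cases (a - h) with ⟨h2, -⟩ | ⟨h2, -⟩ <;>
  linarith [le_abs_self a, neg_abs_le a, le_abs_self h, neg_abs_le h]

lemma one_sub_mul_hingePow_le_average (hlam : 1 ≤ lam) {a h δ : ℝ} (hh : |h| ≤ δ)
    (hδ : lam * δ ≤ 1) :
    (1 - lam * δ) * hingePow lam |a| ≤ (hingePow lam |a + h| + hingePow lam |a - h|) / 2 := by
  have hmid : hingePow lam (max |a| |h|) ≤ (hingePow lam |a + h| + hingePow lam |a - h|) / 2 :=
    (antitone_hingePow (by linarith) (by linarith [abs_add_add_abs_sub_le a h])).trans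
      (hingePow_midpoint_le hlam _ _)
  have hδ0 : 0 ≤ lam * δ := mul_nonneg (by linarith) ((abs_nonneg h).trans hh)
  rcases le_total |h| |a| with hha | hah
  · rw [max_eq_left hha] at hmid
    nlinarith [hingePow_nonneg lam |a|]
  · rw [max_eq_right hah] at hmid
    have hbern := one_sub_mul_le_hingePow hlam (abs_nonneg h)
    have : lam * |h| ≤ lam * δ := mul_le_mul_of_nonneg_left hh (by linarith)
    nlinarith [hingePow_le_one (by linarith : 0 ≤ lam) (abs_nonneg a)]

end hingePow

lemma exists_pos_lt_intervalIntegral {f : ℝ → ℝ} (hf : Integrable f) {c : ℝ}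
    (hc : c < ∫ x, f x) : ∃ A > 0, c < ∫ x in -A..A, f x :=
  (((intervalIntegral_tendsto_integral hf tendsto_neg_atTop_atBot tendsto_id).eventually
    (eventually_gt_nhds hc)).and (eventually_gt_atTop 0)).exists.imp fun _ h => ⟨h.2, h.1⟩

lemma mul_intervalIntegral_le_integral_of_even {J φ : ℝ → ℝ} (hJ : Integrable J)
    (hJ0 : ∀ z, 0 ≤ J z) (hJeven : ∀ z, J (-z) = J z) (hφ : Measurable φ)
    (hφ0 : ∀ y, 0 ≤ φ y) {C : ℝ} (hφC : ∀ y, φ y ≤ C) {x A c : ℝ} (hA : 0 ≤ A)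
    (hc : ∀ z ∈ Icc (-A) A, c ≤ (φ (x + z) + φ (x - z)) / 2) :
    c * ∫ z in -A..A, J z ≤ ∫ y, J (x - y) * φ y := by
  have hbdd : ∀ w : ℝ → ℝ, ∀ᵐ z, ‖φ (w z)‖ ≤ C := fun w =>
    ae_of_all _ fun z => by rw [Real.norm_of_nonneg (hφ0 _)]; exact hφC _
  have hint_add : Integrable fun z => J z * φ (x + z) :=
    hJ.mul_bdd (hφ.comp (measurable_const_add x)).aestronglyMeasurable (hbdd _)
  have hint_sub : Integrable fun z => J z * φ (x - z) :=
    hJ.mul_bdd (hφ.comp (measurable_const_sub x)).aestronglyMeasurable (hbdd _)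
  have hsym : ∫ z, J z * φ (x + z) = ∫ z, J z * φ (x - z) := by
    rw [← integral_neg_eq_self]
    simp only [hJeven, ← sub_eq_add_neg]
  have havg : ∫ y, J (x - y) * φ y = ∫ z, J z * ((φ (x + z) + φ (x - z)) / 2) := by
    calc ∫ y, J (x - y) * φ y = ∫ z, J z * φ (x - z) := by
          simpa only [sub_sub_cancel] using
            integral_sub_left_eq_self (fun z => J z * φ (x - z)) volume x
      _ = ((∫ z, J z * φ (x + z)) + ∫ z, J z * φ (x - z)) / 2 := by rw [hsym]; ring
      _ = _ := by
          rw [← integral_add hint_add hint_sub, ← integral_div]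
          congr 1 with z
          ring
  have hint_avg : Integrable fun z => J z * ((φ (x + z) + φ (x - z)) / 2) :=
    ((hint_add.add hint_sub).div_const 2).congr
      (ae_of_all _ fun z => by simp only [Pi.add_apply]; ring)
  rw [havg, intervalIntegral.integral_of_le (by linarith), ← integral_const_mul]
  calc ∫ z in Ioc (-A) A, c * J z
      ≤ ∫ z in Ioc (-A) A, J z * ((φ (x + z) + φ (x - z)) / 2) := by
        refine setIntegral_mono_on (hJ.integrableOn.const_mul c) hint_avg.integrableOn
          measurableSet_Ioc fun z hz => ?_
        rw [mul_comm]
        exact mul_le_mul_of_nonneg_left (hc z (Ioc_subset_Icc_self hz)) (hJ0 z)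
    _ ≤ ∫ z, J z * ((φ (x + z) + φ (x - z)) / 2) :=
        setIntegral_le_integral hint_avg
          (ae_of_all _ fun z => mul_nonneg (hJ0 z) (by linarith [hφ0 (x + z), hφ0 (x - z)]))

lemma intervalIntegral_mul_one_sub_abs_div_rpow {J : ℝ → ℝ} {lam L : ℝ} (hlam : lam ≠ 0)
    (hL : 0 < L) (x : ℝ) :
    ∫ y in -L..L, J (x - y) * (1 - |y| / L) ^ lam =
      ∫ y, J (x - y) * hingePow lam (|y| / L) := by
  rw [intervalIntegral.integral_of_le (show -L ≤ L by linarith), ←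
    setIntegral_eq_integral_of_forall_compl_eq_zero (s := Ioc (-L) L)
      (f := fun y => J (x - y) * hingePow lam (|y| / L))]
  · refine setIntegral_congr_fun measurableSet_Ioc fun y hy => ?_
    rw [hingePow_of_le_one ((div_le_one hL).2 (abs_le.2 ⟨hy.1.le, hy.2⟩))]
  · intro y hy
    rw [hingePow_of_one_le hlam ((one_le_div hL).2 ?_), mul_zero]
    rw [mem_Ioc, not_and_or, not_lt, not_le] at hy
    rcases hy with hy | hy
    · exact le_abs.2 (Or.inr (by linarith))
    · exact le_abs.2 (Or.inl hy.le)

theorem stmt_14_general (J : ℝ → ℝ)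
    (hJeven : ∀ x, J (-x) = J x) (hJ0 : ∀ x, 0 ≤ J x)
    (hJint : ∫ x, J x = 1) (lam : ℝ) (hlam : 1 ≤ lam) :
    ∀ ε ∈ Set.Ioo (0:ℝ) 1, ∃ L0 > 0, ∀ L ≥ L0, ∀ x ∈ Set.Icc (-L) L,
      (1 - ε) * (1 - |x|/L) ^ lam
        ≤ ∫ y in (-L)..L, J (x - y) * (1 - |y|/L) ^ lam := by
  rintro ε ⟨hε0, hε1⟩
  have hJ : Integrable J := Integrable.of_integral_ne_zero (by rw [hJint]; exact one_ne_zero)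
  obtain ⟨A, hA0, hA⟩ := exists_pos_lt_intervalIntegral hJ (c := 1 - ε / 2) (by linarith)
  refine ⟨2 * lam * A / ε, by positivity, fun L hL x hx => ?_⟩
  have hL0 : 0 < L := lt_of_lt_of_le (by positivity) hL
  have hδ : lam * (A / L) ≤ ε / 2 := by
    rw [ge_iff_le, div_le_iff₀ hε0] at hL
    rw [← mul_div_assoc, div_le_iff₀ hL0]
    linarith
  have hx1 : |x| / L ≤ 1 := (div_le_one hL0).2 (abs_le.2 hx)
  have hlower : ∀ z ∈ Icc (-A) A, (1 - lam * (A / L)) * hingePow lam (|x| / L) ≤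
      (hingePow lam (|x + z| / L) + hingePow lam (|x - z| / L)) / 2 := by
    intro z hz
    have hzA : |z / L| ≤ A / L := by
      rw [abs_div, abs_of_pos hL0]
      exact div_le_div_of_nonneg_right (abs_le.2 hz) hL0.le
    have := one_sub_mul_hingePow_le_average hlam (a := x / L) hzA (by linarith)
    simpa only [← add_div, ← sub_div, abs_div, abs_of_pos hL0] using this
  have hp0 := hingePow_nonneg lam (|x| / L)
  rw [intervalIntegral_mul_one_sub_abs_div_rpow (by linarith) hL0, ← hingePow_of_le_one hx1]
  calc (1 - ε) * hingePow lam (|x| / L)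
      ≤ (1 - lam * (A / L)) * hingePow lam (|x| / L) * (1 - ε / 2) := by
        have hfactor : 1 - ε ≤ (1 - lam * (A / L)) * (1 - ε / 2) := by nlinarith
        linarith [mul_le_mul_of_nonneg_right hfactor hp0]
    _ ≤ (1 - lam * (A / L)) * hingePow lam (|x| / L) * ∫ z in -A..A, J z :=
        mul_le_mul_of_nonneg_left hA.le (mul_nonneg (by linarith) hp0)
    _ ≤ ∫ y, J (x - y) * hingePow lam (|y| / L) :=
        mul_intervalIntegral_le_integral_of_even hJ hJ0 hJeven
          ((measurable_hingePow lam).comp (measurable_abs.div_const L))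
          (fun _ => hingePow_nonneg _ _)
          (fun y => hingePow_le_one (by linarith) (div_nonneg (abs_nonneg y) hL0.le)) hA0.le hlower

theorem stmt_14 (J : ℝ → ℝ) (hJc : Continuous J) (hJb : ∃ M, ∀ x, |J x| ≤ M)
    (hJeven : ∀ x, J (-x) = J x) (hJ0 : ∀ x, 0 ≤ J x) (hJpos : 0 < J 0)
    (hJint : ∫ x, J x = 1) (lam : ℝ) (hlam : 1 ≤ lam) :
    ∀ ε ∈ Set.Ioo (0:ℝ) 1, ∃ L0 > 0, ∀ L ≥ L0, ∀ x ∈ Set.Icc (-L) L,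
      (1 - ε) * (1 - |x|/L) ^ lam
        ≤ ∫ y in (-L)..L, J (x - y) * (1 - |y|/L) ^ lam :=
  stmt_14_general J hJeven hJ0 hJint lam hlam
end
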